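/- Vertex removal bound: let p, q, p', q' be integers with 0 < p' < p, 0 < q' < q, p ≥ 2q, p' ≥ 2q', and p·q' − q·p' = 1. Then α(E_{p'/q'}) ≤ α(E_{p/q}) ≤ (p/(p−1))·α(E_{p'/q'}), and for the Shannon capacity, Θ(E_{p'/q'}) ≤ Θ(E_{p/q}) ≤ (p/(p−1))·Θ(E_{p'/q'}). -/

import Mathlib

open SimpleGraph

/-- The fraction graph `E_{p/q}` on vertex set `ZMod p`: distinct `u, v` are adjacent
iff the representative of `u - v` or of `v - u` in `{0, …, p-1}` is strictly less than `q`. -/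
def fractionGraph (p q : ℕ) : SimpleGraph (ZMod p) where
  Adj u v := u ≠ v ∧ ((u - v).val < q ∨ (v - u).val < q)
  symm := ⟨fun _ _ h => ⟨h.1.symm, h.2.symm⟩⟩
  loopless := ⟨fun _ h => h.1 rfl⟩

/-- The cycle graph `C_n` on vertex set `ZMod n`: `i` is adjacent to `i ± 1`. -/
def cycleGraphZMod (n : ℕ) : SimpleGraph (ZMod n) where
  Adj u v := u ≠ v ∧ (u - v = 1 ∨ v - u = 1)
  symm := ⟨fun _ _ h => ⟨h.1.symm, h.2.symm⟩⟩
  loopless := ⟨fun _ h => h.1 rfl⟩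

/-- The strong product of two simple graphs. -/
def strongProd {α β : Type*} (G : SimpleGraph α) (H : SimpleGraph β) :
    SimpleGraph (α × β) where
  Adj x y := x ≠ y ∧ (x.1 = y.1 ∨ G.Adj x.1 y.1) ∧ (x.2 = y.2 ∨ H.Adj x.2 y.2)
  symm := ⟨fun _ _ h => ⟨h.1.symm, h.2.1.imp Eq.symm (fun h' => h'.symm), h.2.2.imp Eq.symm (fun h' => h'.symm)⟩⟩
  loopless := ⟨fun _ h => h.1 rfl⟩

/-- The `n`-fold strong power of a simple graph. -/
def strongPow {α : Type*} (G : SimpleGraph α) (n : ℕ) : SimpleGraph (Fin n → α) where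
  Adj u v := u ≠ v ∧ ∀ i, u i = v i ∨ G.Adj (u i) (v i)
  symm := ⟨fun _ _ h => ⟨h.1.symm, fun i => (h.2 i).imp Eq.symm (fun h' => h'.symm)⟩⟩
  loopless := ⟨fun _ h => h.1 rfl⟩

/-- The strong product of a family of simple graphs. -/
def strongProdFamily {ι : Type*} {α : ι → Type*} (G : ∀ i, SimpleGraph (α i)) :
    SimpleGraph (∀ i, α i) where
  Adj u v := u ≠ v ∧ ∀ i, u i = v i ∨ (G i).Adj (u i) (v i)
  symm := ⟨fun _ _ h => ⟨h.1.symm, fun i => (h.2 i).imp Eq.symm (fun h' => h'.symm)⟩⟩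
  loopless := ⟨fun _ h => h.1 rfl⟩

/-- A finset of vertices is independent if its elements are pairwise non-adjacent. -/
def IsIndepFinset {α : Type*} (G : SimpleGraph α) (s : Finset α) : Prop :=
  ∀ u ∈ s, ∀ v ∈ s, u ≠ v → ¬ G.Adj u v

/-- The independence number of a graph: the greatest cardinality of an independent set. -/
noncomputable def graphIndepNum {α : Type*} (G : SimpleGraph α) : ℕ :=
  sSup {n : ℕ | ∃ s : Finset α, IsIndepFinset G s ∧ s.card = n}

/-- A cohomomorphism from `G` to `H`: a map sending distinct non-adjacent vertices
to distinct non-adjacent vertices. -/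
def IsCohom {α β : Type*} (G : SimpleGraph α) (H : SimpleGraph β) (f : α → β) : Prop :=
  ∀ u v, u ≠ v → ¬ G.Adj u v → f u ≠ f v ∧ ¬ H.Adj (f u) (f v)

/-- Disjoint union of two simple graphs. -/
def disjUnion {α β : Type*} (G : SimpleGraph α) (H : SimpleGraph β) :
    SimpleGraph (α ⊕ β) where
  Adj x y := (∃ a b, x = Sum.inl a ∧ y = Sum.inl b ∧ G.Adj a b) ∨
             (∃ a b, x = Sum.inr a ∧ y = Sum.inr b ∧ H.Adj a b)
  symm := by
    refine ⟨?_⟩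
    rintro x y (⟨a, b, rfl, rfl, h⟩ | ⟨a, b, rfl, rfl, h⟩)
    · exact Or.inl ⟨b, a, rfl, rfl, h.symm⟩
    · exact Or.inr ⟨b, a, rfl, rfl, h.symm⟩
  loopless := by
    refine ⟨?_⟩
    rintro x (⟨a, b, rfl, heq, h⟩ | ⟨a, b, rfl, heq, h⟩) <;>
      · injection heq with h'
        subst h'
        exact h.ne rfl

/-- The open circle graph `E_r^o` on the circle `ℝ/ℤ`: distinct points are adjacent
iff their distance is strictly less than `1/r`. -/
noncomputable def openCircleGraph (r : ℝ) : SimpleGraph (AddCircle (1 : ℝ)) where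
  Adj x y := x ≠ y ∧ dist x y < 1 / r
  symm := ⟨fun x y h => ⟨h.1.symm, (dist_comm y x).trans_lt h.2⟩⟩
  loopless := ⟨fun _ h => h.1 rfl⟩

/-- The closed circle graph `E_r^c` on the circle `ℝ/ℤ`: distinct points are adjacent
iff their distance is at most `1/r`. -/
noncomputable def closedCircleGraph (r : ℝ) : SimpleGraph (AddCircle (1 : ℝ)) where
  Adj x y := x ≠ y ∧ dist x y ≤ 1 / r
  symm := ⟨fun x y h => ⟨h.1.symm, (dist_comm y x).trans_le h.2⟩⟩
  loopless := ⟨fun _ h => h.1 rfl⟩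

/-- The Shannon capacity `Θ(G) = sup_{n ≥ 1} α(G^{⊠n})^{1/n}`. -/
noncomputable def shannonCapacity {α : Type*} (G : SimpleGraph α) : ℝ :=
  ⨆ n : ℕ+, (graphIndepNum (strongPow G n) : ℝ) ^ (((n : ℕ) : ℝ)⁻¹)

section IndepBasics
variable {α β : Type*}

lemma indepSet_nonempty (G : SimpleGraph α) :
    {n : ℕ | ∃ s : Finset α, IsIndepFinset G s ∧ s.card = n}.Nonempty :=
  ⟨0, ∅, fun u hu => by simp at hu, rfl⟩

lemma indepSet_bddAbove (G : SimpleGraph α) [Fintype α] :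
    BddAbove {n : ℕ | ∃ s : Finset α, IsIndepFinset G s ∧ s.card = n} := by
  refine ⟨Fintype.card α, ?_⟩
  rintro n ⟨s, -, rfl⟩
  exact (Finset.card_le_univ s).trans_eq Finset.card_univ

lemma card_le_indepNum {G : SimpleGraph α} [Fintype α] {s : Finset α}
    (hs : IsIndepFinset G s) : s.card ≤ graphIndepNum G :=
  le_csSup (indepSet_bddAbove G) ⟨s, hs, rfl⟩

lemma exists_indep_card (G : SimpleGraph α) [Fintype α] :
    ∃ s : Finset α, IsIndepFinset G s ∧ s.card = graphIndepNum G :=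
  Nat.sSup_mem (indepSet_nonempty G) (indepSet_bddAbove G)

lemma indepNum_le_card (G : SimpleGraph α) [Fintype α] : graphIndepNum G ≤ Fintype.card α := by
  obtain ⟨s, -, hc⟩ := exists_indep_card G
  rw [← hc]
  exact (Finset.card_le_univ s).trans_eq Finset.card_univ

lemma IsCohom.indepNum_le {G : SimpleGraph α} {H : SimpleGraph β} {f : α → β}
    [Fintype α] [Fintype β] (hf : IsCohom G H f) : graphIndepNum G ≤ graphIndepNum H := by
  classical
  obtain ⟨s, hs, hc⟩ := exists_indep_card G
  rw [← hc]
  have hinj : Set.InjOn f s := by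
    intro u hu v hv huv
    by_contra hne
    exact (hf u v hne (hs u hu v hv hne)).1 huv
  have himg : IsIndepFinset H (s.image f) := by
    intro x hx y hy hxy hadj
    simp only [Finset.mem_image] at hx hy
    obtain ⟨u, hu, rfl⟩ := hx; obtain ⟨v, hv, rfl⟩ := hy
    have hne : u ≠ v := by rintro rfl; exact hxy rfl
    exact (hf u v hne (hs u hu v hv hne)).2 hadj
  calc s.card = (s.image f).card := (Finset.card_image_of_injOn hinj).symm
    _ ≤ graphIndepNum H := card_le_indepNum himg

lemma not_adj_strongPow {G : SimpleGraph α} {n : ℕ} {u v : Fin n → α}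
    (huv : u ≠ v) (h : ¬ (strongPow G n).Adj u v) :
    ∃ i, u i ≠ v i ∧ ¬ G.Adj (u i) (v i) := by
  by_contra hc
  push_neg at hc
  exact h ⟨huv, fun i => by
    by_cases h' : u i = v i
    · exact Or.inl h'
    · exact Or.inr (hc i h')⟩

lemma IsCohom.strongPow {G : SimpleGraph α} {H : SimpleGraph β} {f : α → β}
    (hf : IsCohom G H f) (n : ℕ) :
    IsCohom (strongPow G n) (strongPow H n) (fun u => f ∘ u) := by
  intro u v huv hnadj
  obtain ⟨i, hi1, hi2⟩ := not_adj_strongPow huv hnadj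
  obtain ⟨h1, h2⟩ := hf (u i) (v i) hi1 hi2
  refine ⟨fun h => h1 (congrFun h i), ?_⟩
  rintro ⟨-, hall⟩
  rcases hall i with h | h
  · exact h1 h
  · exact h2 h

lemma indepNum_strongPow_one (G : SimpleGraph α) [Fintype α] :
    graphIndepNum (strongPow G 1) = graphIndepNum G := by
  apply le_antisymm
  · have h : IsCohom (strongPow G 1) G (fun u => u 0) := by
      intro u v huv hnadj
      obtain ⟨i, hi1, hi2⟩ := not_adj_strongPow huv hnadj
      have : i = 0 := Subsingleton.elim _ _
      subst this
      exact ⟨hi1, hi2⟩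
    exact h.indepNum_le
  · have h : IsCohom G (strongPow G 1) (fun a => fun _ => a) := by
      intro u v huv hnadj
      refine ⟨fun h => huv (congrFun h 0), ?_⟩
      rintro ⟨-, hall⟩
      rcases hall 0 with h | h
      exacts [huv h, hnadj h]
    exact h.indepNum_le

end IndepBasics

section ZModAux
variable {p : ℕ} [NeZero p]

lemma zmod_val_sub_add {u v : ZMod p} (h : u ≠ v) :
    (u - v).val + (v - u).val = p := by
  have h1 : u - v ≠ 0 := sub_ne_zero.mpr h
  have h2 : v - u = -(u - v) := by ring
  rw [h2, ZMod.neg_val, if_neg h1]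
  have hlt := ZMod.val_lt (u - v)
  have h3 : (u - v).val ≠ 0 := by simpa [ZMod.val_eq_zero] using h1
  omega

lemma zmod_sub_val_of_lt {u v : ZMod p} (h : u.val < v.val) :
    (v - u).val = v.val - u.val := by
  have hv := ZMod.val_lt v
  have he : v - u = ((v.val - u.val : ℕ) : ZMod p) := by
    rw [Nat.cast_sub h.le, ZMod.natCast_rightInverse u, ZMod.natCast_rightInverse v]
  rw [he, ZMod.val_natCast, Nat.mod_eq_of_lt (by omega)]

end ZModAux

section NumberCore
variable {p q p' q' : ℕ}

lemma coprime_of_det (hdet : p * q' = q * p' + 1) : Nat.Coprime q' q := by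
  have h1 : Nat.gcd q' q ∣ p * q' := Dvd.dvd.mul_left (Nat.gcd_dvd_left q' q) p
  have h2 : Nat.gcd q' q ∣ q * p' := Dvd.dvd.mul_right (Nat.gcd_dvd_right q' q) p'
  have h3 : Nat.gcd q' q ∣ 1 := by
    have h4 := Nat.dvd_sub h1 h2
    rwa [hdet, Nat.add_sub_cancel_left] at h4
  exact Nat.dvd_one.mp h3

/-- The unique `x < q` with `x*q' ≡ q-1 (mod q)`. -/
noncomputable def badX (q q' : ℕ) : ℕ :=
  ((((q - 1 : ℕ) : ZMod q)) * ((q' : ZMod q))⁻¹).val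

lemma badX_lt (hq : 0 < q) : badX q q' < q := by
  haveI : NeZero q := ⟨by omega⟩
  exact ZMod.val_lt _

lemma badX_spec (hq : 0 < q) (hco : Nat.Coprime q' q) :
    badX q q' * q' % q = q - 1 := by
  haveI : NeZero q := ⟨by omega⟩
  have key : ((badX q q' * q' : ℕ) : ZMod q) = ((q - 1 : ℕ) : ZMod q) := by
    push_cast
    rw [badX, ZMod.natCast_rightInverse]
    rw [mul_assoc, ZMod.inv_mul_of_unit, mul_one]
    exact (ZMod.unitOfCoprime q' hco).isUnit
  have := (ZMod.natCast_eq_natCast_iff' _ _ _).mp key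
  rwa [Nat.mod_eq_of_lt (show q - 1 < q by omega)] at this

lemma badX_unique (hq : 0 < q) (hco : Nat.Coprime q' q) {x : ℕ}
    (hx : x < q) (hmod : x * q' % q = q - 1) : x = badX q q' := by
  haveI : NeZero q := ⟨by omega⟩
  have h1 : ((x * q' : ℕ) : ZMod q) = ((badX q q' * q' : ℕ) : ZMod q) := by
    rw [ZMod.natCast_eq_natCast_iff']
    rw [hmod, badX_spec hq hco]
  push_cast at h1
  have hu : IsUnit ((q' : ZMod q)) := (ZMod.unitOfCoprime q' hco).isUnit
  have h2 : ((x : ℕ) : ZMod q) = ((badX q q' : ℕ) : ZMod q) := by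
    exact hu.mul_left_cancel (by rw [mul_comm ((q':ZMod q)) _, mul_comm ((q':ZMod q)) _]; exact h1)
  have := (ZMod.natCast_eq_natCast_iff' _ _ _).mp h2
  rwa [Nat.mod_eq_of_lt hx, Nat.mod_eq_of_lt (badX_lt hq)] at this

end NumberCore

section ArithCore
variable {p q p' q' : ℕ}

/-- Range bound for the contraction map. -/
lemma grange (hq'0 : 0 < q') (hq'q : q' < q) (hpq : 2 * q ≤ p) (hp'0 : 0 < p')
    (hdet : p * q' = q * p' + 1) {z : ℕ} (hz : z < p)
    (hzv : z ≠ badX q q' + p - q) : z * q' / q < p' := by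
  have hq0 : 0 < q := by omega
  rw [Nat.div_lt_iff_lt_mul hq0]
  have hcomm : p' * q = q * p' := Nat.mul_comm _ _
  by_cases hq1 : q' = 1
  · subst hq1
    have hb : q - 1 = badX q 1 := by
      apply badX_unique hq0 (Nat.coprime_one_left q) (by omega)
      rw [Nat.mul_one, Nat.mod_eq_of_lt (by omega)]
    omega
  · have h1 : z * q' ≤ (p - 1) * q' := mul_le_mul_left (by omega) q'
    have h2 : (p - 1) * q' + q' = p * q' := by
      rw [← Nat.succ_mul]
      congr 1
      omega
    omega

/-- Core estimate for the contraction map `x ↦ x*q'/q`. -/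
lemma gcore (hq'0 : 0 < q') (hq'q : q' < q) (hpq : 2 * q ≤ p) (hp'q' : 2 * q' ≤ p')
    (hdet : p * q' = q * p' + 1) {a b : ℕ}
    (hb : b < p) (hab : a < b)
    (hbv : b ≠ badX q q' + p - q)
    (h1 : q ≤ b - a) (h2 : b - a ≤ p - q) :
    a * q' / q + q' ≤ b * q' / q ∧ b * q' / q ≤ a * q' / q + (p' - q') := by
  have hq0 : 0 < q := by omega
  have hco : Nat.Coprime q' q := coprime_of_det hdet
  set ga := a * q' / q with hga
  set gb := b * q' / q with hgb
  set ra := a * q' % q with hra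
  set rb := b * q' % q with hrb
  have ea : q * ga + ra = a * q' := Nat.div_add_mod _ q
  have eb : q * gb + rb = b * q' := Nat.div_add_mod _ q
  have ra_lt : ra < q := Nat.mod_lt _ hq0
  have rb_lt : rb < q := Nat.mod_lt _ hq0
  -- move to ℤ
  have Ea : (q : ℤ) * ga + ra = a * q' := by exact_mod_cast ea
  have Eb : (q : ℤ) * gb + rb = b * q' := by exact_mod_cast eb
  have Edet : (p : ℤ) * q' = q * p' + 1 := by exact_mod_cast hdet
  have H1 : (q : ℤ) ≤ (b : ℤ) - a := by zify at h1; omega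
  have H2 : (b : ℤ) - a ≤ (p : ℤ) - q := by zify at h2; omega
  have Hm1 : (q : ℤ) * q' ≤ ((b : ℤ) - a) * q' := by
    apply mul_le_mul_of_nonneg_right H1 (by positivity)
  -- lower bound
  have Ra : (ra : ℤ) < q := by exact_mod_cast ra_lt
  have Rb : (rb : ℤ) < q := by exact_mod_cast rb_lt
  have hlow : (q : ℤ) * (ga + q') < q * (gb + 1) := by linarith
  have hlowc : ga + q' ≤ gb := by
    have h := (mul_lt_mul_iff_right₀ (show (0:ℤ) < q by exact_mod_cast hq0)).mp hlow
    exact_mod_cast Int.lt_add_one_iff.mp h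
  refine ⟨hlowc, ?_⟩
  -- upper bound
  have hple : q' ≤ p' := by omega
  have hup : (q : ℤ) * gb < q * (ga + ((p':ℤ) - q') + 1) := by
    by_cases hbd : b - a = p - q
    · have Hbd : (b : ℤ) - a = (p : ℤ) - q := by zify at hbd; omega
      have hrale : ra ≤ q - 2 := by
        by_contra hcon
        have hraq : ra = q - 1 := by omega
        have haq : a < q := by omega
        have : a = badX q q' := badX_unique hq0 hco haq (by rw [← hra]; omega)
        apply hbv
        omega
      have Hrale : (ra : ℤ) ≤ (q : ℤ) - 2 := by zify at hrale; omega
      have Hmx : ((b : ℤ) - a) * q' = ((p : ℤ) - q) * q' := by rw [Hbd]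
      linarith
    · have hble : b - a ≤ p - q - 1 := by omega
      have Hble : (b : ℤ) - a ≤ (p : ℤ) - q - 1 := by zify at hble; omega
      have Hm2 : ((b:ℤ) - a) * q' ≤ ((p:ℤ) - q - 1) * q' :=
        mul_le_mul_of_nonneg_right Hble (by positivity)
      have hq'1 : (1:ℤ) ≤ q' := by exact_mod_cast hq'0
      linarith
  have h := (mul_lt_mul_iff_right₀ (show (0:ℤ) < q by exact_mod_cast hq0)).mp hup
  have hfin : (gb : ℤ) ≤ ga + ((p':ℤ) - q') := by omega
  have : (gb : ℤ) ≤ ga + ((p' - q' : ℕ) : ℤ) := by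
    rwa [Nat.cast_sub hple]
  exact_mod_cast this

/-- Core estimate for the expansion map `i ↦ ⌈i*q/q'⌉ = (i*q + q' - 1)/q'`. -/
lemma fcore (hq'0 : 0 < q') (hq'q : q' < q) (hp'q' : 2 * q' ≤ p') (hpq : 2 * q ≤ p)
    (hdet : p * q' = q * p' + 1) {i j : ℕ}
    (hj : j < p') (hij : i < j)
    (h1 : q' ≤ j - i) (h2 : j - i ≤ p' - q') :
    (i * q + (q' - 1)) / q' + q ≤ (j * q + (q' - 1)) / q' ∧
    (j * q + (q' - 1)) / q' ≤ (i * q + (q' - 1)) / q' + (p - q) ∧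
    (j * q + (q' - 1)) / q' < p := by
  have hq0 : 0 < q := by omega
  have hqlep : q ≤ p := by omega
  set fi := (i * q + (q' - 1)) / q' with hfi
  set fj := (j * q + (q' - 1)) / q' with hfj
  set si := (i * q + (q' - 1)) % q' with hsi
  set sj := (j * q + (q' - 1)) % q' with hsj
  have ei : q' * fi + si = i * q + (q' - 1) := Nat.div_add_mod _ q'
  have ej : q' * fj + sj = j * q + (q' - 1) := Nat.div_add_mod _ q'
  have si_lt : si < q' := Nat.mod_lt _ hq'0
  have sj_lt : sj < q' := Nat.mod_lt _ hq'0
  have Ei : (q' : ℤ) * fi + si = i * q + ((q' : ℤ) - 1) := by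
    zify [show 1 ≤ q' from hq'0] at ei
    linarith
  have Ej : (q' : ℤ) * fj + sj = j * q + ((q' : ℤ) - 1) := by
    zify [show 1 ≤ q' from hq'0] at ej
    linarith
  have Edet : (p : ℤ) * q' = q * p' + 1 := by exact_mod_cast hdet
  have H1 : (q' : ℤ) ≤ (j : ℤ) - i := by zify at h1; omega
  have H2 : (j : ℤ) - i ≤ (p' : ℤ) - q' := by zify at h2; omega
  have Hm1 : (q' : ℤ) * q ≤ ((j : ℤ) - i) * q :=
    mul_le_mul_of_nonneg_right H1 (by positivity)
  have Hm2 : ((j : ℤ) - i) * q ≤ ((p' : ℤ) - q') * q :=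
    mul_le_mul_of_nonneg_right H2 (by positivity)
  have hq0' : (0:ℤ) < q' := by exact_mod_cast hq'0
  -- lower bound
  have Si : (si : ℤ) < q' := by exact_mod_cast si_lt
  have Sj : (sj : ℤ) < q' := by exact_mod_cast sj_lt
  have hlow : (q' : ℤ) * (fi + q) < q' * (fj + 1) := by linarith
  have hlowc : fi + q ≤ fj := by
    have h := (mul_lt_mul_iff_right₀ hq0').mp hlow
    exact_mod_cast Int.lt_add_one_iff.mp h
  -- upper bound
  have hup : (q' : ℤ) * fj < q' * (fi + ((p:ℤ) - q) + 1) := by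
    have hqq' : (q' : ℤ) + 1 ≤ q := by exact_mod_cast hq'q
    linarith
  have hupc : fj ≤ fi + (p - q) := by
    have h := (mul_lt_mul_iff_right₀ hq0').mp hup
    have hfin : (fj : ℤ) ≤ fi + ((p:ℤ) - q) := by omega
    have : (fj : ℤ) ≤ fi + ((p - q : ℕ) : ℤ) := by rwa [Nat.cast_sub hqlep]
    exact_mod_cast this
  -- range
  have hrange : fj < p := by
    have Hj : (j : ℤ) ≤ (p' : ℤ) - 1 := by omega
    have Hm3 : (j : ℤ) * q ≤ ((p' : ℤ) - 1) * q :=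
      mul_le_mul_of_nonneg_right Hj (by positivity)
    have hqq' : (q' : ℤ) + 1 ≤ q := by exact_mod_cast hq'q
    have hupr : (q' : ℤ) * fj < q' * p := by linarith
    have h := (mul_lt_mul_iff_right₀ hq0').mp hupr
    exact_mod_cast h
  exact ⟨hlowc, hupc, hrange⟩

end ArithCore


section FracGraph
variable {p q p' q' : ℕ}

lemma frac_adj_iff (u v : ZMod p) :
    (fractionGraph p q).Adj u v ↔ u ≠ v ∧ ((u - v).val < q ∨ (v - u).val < q) := Iff.rfl

lemma frac_not_adj {u v : ZMod p} (h : u ≠ v) :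
    ¬ (fractionGraph p q).Adj u v ↔ q ≤ (u - v).val ∧ q ≤ (v - u).val := by
  simp only [frac_adj_iff, not_and, not_or, not_lt]
  constructor
  · intro hh; exact hh h
  · intro hh _; exact hh

/-- The expansion map `E_{p'/q'} → E_{p/q}`. -/
noncomputable def fmap (p q p' q' : ℕ) : ZMod p' → ZMod p :=
  fun i => (((i.val * q + (q' - 1)) / q' : ℕ) : ZMod p)

/-- The contraction map `E_{p/q} → E_{p'/q'}`. -/
noncomputable def gmap (p q p' q' : ℕ) : ZMod p → ZMod p' :=
  fun x => ((x.val * q' / q : ℕ) : ZMod p')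

variable (hp'0 : 0 < p') (hp'p : p' < p) (hq'0 : 0 < q') (hq'q : q' < q)
    (hpq : 2 * q ≤ p) (hpq' : 2 * q' ≤ p') (hdet : p * q' = q * p' + 1)

section
include hp'0 hp'p hq'0 hq'q hpq hpq' hdet

lemma fmap_cohom :
    IsCohom (fractionGraph p' q') (fractionGraph p q) (fmap p q p' q') := by
  haveI : NeZero p := ⟨by omega⟩
  haveI : NeZero p' := ⟨by omega⟩
  have key : ∀ u v : ZMod p', u.val < v.val → ¬ (fractionGraph p' q').Adj u v →
      fmap p q p' q' u ≠ fmap p q p' q' v ∧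
      ¬ (fractionGraph p q).Adj (fmap p q p' q' u) (fmap p q p' q' v) := by
    intro u v hval hnadj
    have hne : u ≠ v := fun h => absurd (congrArg ZMod.val h) (by omega)
    have hj : v.val < p' := ZMod.val_lt v
    obtain ⟨hd1, hd2⟩ := (frac_not_adj hne).mp hnadj
    have hvu : (v - u).val = v.val - u.val := zmod_sub_val_of_lt hval
    have hsum := zmod_val_sub_add hne
    have h1 : q' ≤ v.val - u.val := by omega
    have h2 : v.val - u.val ≤ p' - q' := by omega
    obtain ⟨hf1, hf2, hf3⟩ := fcore hq'0 hq'q hpq' hpq hdet hj hval h1 h2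
    set fi := (u.val * q + (q' - 1)) / q' with hfi
    set fj := (v.val * q + (q' - 1)) / q' with hfj
    have hfilt : fi < p := by omega
    have hFu : (fmap p q p' q' u).val = fi := by
      rw [fmap, ZMod.val_natCast, Nat.mod_eq_of_lt hfilt]
    have hFv : (fmap p q p' q' v).val = fj := by
      rw [fmap, ZMod.val_natCast, Nat.mod_eq_of_lt hf3]
    have hFne : fmap p q p' q' u ≠ fmap p q p' q' v := by
      intro h
      have := congrArg ZMod.val h
      rw [hFu, hFv] at this
      omega
    refine ⟨hFne, ?_⟩
    rw [frac_not_adj hFne]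
    have hlt : (fmap p q p' q' u).val < (fmap p q p' q' v).val := by omega
    have hd : (fmap p q p' q' v - fmap p q p' q' u).val = fj - fi := by
      rw [zmod_sub_val_of_lt hlt, hFu, hFv]
    have hsum2 := zmod_val_sub_add hFne
    constructor <;> omega
  intro u v huv hnadj
  have hvne : u.val ≠ v.val := fun h => huv (by
    have := congrArg (fun t : ℕ => ((t : ℕ) : ZMod p')) h
    simpa [ZMod.natCast_rightInverse u, ZMod.natCast_rightInverse v] using this)
  rcases lt_or_gt_of_ne hvne with h | h
  · exact key u v h hnadj
  · obtain ⟨h1, h2⟩ := key v u h (fun ha => hnadj ha.symm)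
    exact ⟨h1.symm, fun ha => h2 ha.symm⟩

/-- The removed vertex. -/
noncomputable def vSpec (p q q' : ℕ) : ZMod p := ((badX q q' + p - q : ℕ) : ZMod p)

lemma vSpec_val : (vSpec p q q').val = badX q q' + p - q := by
  haveI : NeZero p := ⟨by omega⟩
  have hb : badX q q' < q := badX_lt (by omega)
  rw [vSpec, ZMod.val_natCast, Nat.mod_eq_of_lt (by omega)]

lemma gmap_spec : ∀ x y : ZMod p, x ≠ vSpec p q q' → y ≠ vSpec p q q' → x ≠ y →
    ¬ (fractionGraph p q).Adj x y →
    gmap p q p' q' x ≠ gmap p q p' q' y ∧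
    ¬ (fractionGraph p' q').Adj (gmap p q p' q' x) (gmap p q p' q' y) := by
  haveI : NeZero p := ⟨by omega⟩
  haveI : NeZero p' := ⟨by omega⟩
  have hvv := vSpec_val hp'0 hp'p hq'0 hq'q hpq hpq' hdet
  have key : ∀ x y : ZMod p, x.val < y.val → x ≠ vSpec p q q' → y ≠ vSpec p q q' →
      ¬ (fractionGraph p q).Adj x y →
      gmap p q p' q' x ≠ gmap p q p' q' y ∧
      ¬ (fractionGraph p' q').Adj (gmap p q p' q' x) (gmap p q p' q' y) := by
    intro x y hval hxv hyv hnadj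
    have hne : x ≠ y := fun h => absurd (congrArg ZMod.val h) (by omega)
    have hbp : y.val < p := ZMod.val_lt y
    have hap : x.val < p := ZMod.val_lt x
    have hxval : x.val ≠ badX q q' + p - q := fun h => hxv (by
      have : x = ((x.val : ℕ) : ZMod p) := (ZMod.natCast_rightInverse x).symm
      rw [this, h]; rfl)
    have hyval : y.val ≠ badX q q' + p - q := fun h => hyv (by
      have : y = ((y.val : ℕ) : ZMod p) := (ZMod.natCast_rightInverse y).symm
      rw [this, h]; rfl)
    obtain ⟨hd1, hd2⟩ := (frac_not_adj hne).mp hnadj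
    have hvu : (y - x).val = y.val - x.val := zmod_sub_val_of_lt hval
    have hsum := zmod_val_sub_add hne
    have h1 : q ≤ y.val - x.val := by omega
    have h2 : y.val - x.val ≤ p - q := by omega
    obtain ⟨hg1, hg2⟩ := gcore hq'0 hq'q hpq hpq' hdet hbp hval hyval h1 h2
    set ga := x.val * q' / q with hga
    set gb := y.val * q' / q with hgb
    have hgalt : ga < p' := grange hq'0 hq'q hpq hp'0 hdet hap hxval
    have hgblt : gb < p' := grange hq'0 hq'q hpq hp'0 hdet hbp hyval
    have hGx : (gmap p q p' q' x).val = ga := by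
      rw [gmap, ZMod.val_natCast, Nat.mod_eq_of_lt hgalt]
    have hGy : (gmap p q p' q' y).val = gb := by
      rw [gmap, ZMod.val_natCast, Nat.mod_eq_of_lt hgblt]
    have hGne : gmap p q p' q' x ≠ gmap p q p' q' y := by
      intro h
      have := congrArg ZMod.val h
      rw [hGx, hGy] at this
      omega
    refine ⟨hGne, ?_⟩
    rw [frac_not_adj hGne]
    have hlt : (gmap p q p' q' x).val < (gmap p q p' q' y).val := by omega
    have hd : (gmap p q p' q' y - gmap p q p' q' x).val = gb - ga := by
      rw [zmod_sub_val_of_lt hlt, hGx, hGy]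
    have hsum2 := zmod_val_sub_add hGne
    constructor <;> omega
  intro x y hxv hyv hxy hnadj
  have hvne : x.val ≠ y.val := fun h => hxy (by
    have := congrArg (fun t : ℕ => ((t : ℕ) : ZMod p)) h
    simpa [ZMod.natCast_rightInverse x, ZMod.natCast_rightInverse y] using this)
  rcases lt_or_gt_of_ne hvne with h | h
  · exact key x y h hxv hyv hnadj
  · obtain ⟨h1, h2⟩ := key y x h hyv hxv (fun ha => hnadj ha.symm)
    exact ⟨h1.symm, fun ha => h2 ha.symm⟩

end
end FracGraph

section Averaging
variable {p q p' q' : ℕ}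
variable (hp'0 : 0 < p') (hp'p : p' < p) (hq'0 : 0 < q') (hq'q : q' < q)
    (hpq : 2 * q ≤ p) (hpq' : 2 * q' ≤ p') (hdet : p * q' = q * p' + 1)
include hp'0 hp'p hq'0 hq'q hpq hpq' hdet

lemma averaging (n : ℕ) :
    (p - 1) ^ n * graphIndepNum (strongPow (fractionGraph p q) n) ≤
    p ^ n * graphIndepNum (strongPow (fractionGraph p' q') n) := by
  classical
  haveI : NeZero p := ⟨by omega⟩
  haveI : NeZero p' := ⟨by omega⟩
  obtain ⟨I, hI, hIcard⟩ := exists_indep_card (strongPow (fractionGraph p q) n)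
  rw [← hIcard]
  set v0 := vSpec p q q' with hv0
  set cnt : (Fin n → ZMod p) → ℕ :=
    fun t => (I.filter (fun x => ∀ i, x i + t i ≠ v0)).card with hcnt
  have hcount : ∀ x : Fin n → ZMod p,
      (Finset.univ.filter (fun t : Fin n → ZMod p => ∀ i, x i + t i ≠ v0)).card
        = (p - 1) ^ n := by
    intro x
    have e : {t : Fin n → ZMod p // ∀ i, x i + t i ≠ v0} ≃ (Fin n → {z : ZMod p // z ≠ v0}) :=
      { toFun := fun t i => ⟨x i + t.1 i, t.2 i⟩
        invFun := fun s => ⟨fun i => (s i).1 - x i, fun i => by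
          have h := (s i).2
          simpa using h⟩
        left_inv := fun t => by
          apply Subtype.ext
          funext i
          simp
        right_inv := fun s => by
          funext i
          apply Subtype.ext
          simp }
    have h1 : (Finset.univ.filter (fun t : Fin n → ZMod p => ∀ i, x i + t i ≠ v0)).card
        = Fintype.card {t : Fin n → ZMod p // ∀ i, x i + t i ≠ v0} :=
      (Fintype.card_subtype _).symm
    have h2 : Fintype.card {z : ZMod p // z ≠ v0} = p - 1 := by
      rw [Fintype.card_subtype, Finset.filter_ne',
        Finset.card_erase_of_mem (Finset.mem_univ v0), Finset.card_univ, ZMod.card]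
    rw [h1, Fintype.card_congr e, Fintype.card_fun, h2, Fintype.card_fin]
  have hsum : ∑ t : Fin n → ZMod p, cnt t = I.card * (p - 1) ^ n := by
    calc ∑ t : Fin n → ZMod p, cnt t
        = ∑ t : Fin n → ZMod p, ∑ x ∈ I, if (∀ i, x i + t i ≠ v0) then 1 else 0 :=
          Finset.sum_congr rfl (fun t _ => Finset.card_filter _ _)
      _ = ∑ x ∈ I, ∑ t : Fin n → ZMod p, if (∀ i, x i + t i ≠ v0) then 1 else 0 :=
          Finset.sum_comm
      _ = ∑ x ∈ I, (Finset.univ.filter (fun t : Fin n → ZMod p => ∀ i, x i + t i ≠ v0)).card :=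
          Finset.sum_congr rfl (fun x _ => (Finset.card_filter _ _).symm)
      _ = ∑ _x ∈ I, (p - 1) ^ n := Finset.sum_congr rfl (fun x _ => hcount x)
      _ = I.card * (p - 1) ^ n := by rw [Finset.sum_const, smul_eq_mul]
  have hcardt : (Finset.univ : Finset (Fin n → ZMod p)).card = p ^ n := by
    rw [Finset.card_univ, Fintype.card_fun, ZMod.card, Fintype.card_fin]
  have hex : ∃ t : Fin n → ZMod p, (p - 1) ^ n * I.card ≤ p ^ n * cnt t := by
    have hne : (Finset.univ : Finset (Fin n → ZMod p)).Nonempty := Finset.univ_nonempty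
    have hle : ∑ _t ∈ (Finset.univ : Finset (Fin n → ZMod p)), (p - 1) ^ n * I.card
        ≤ ∑ t ∈ Finset.univ, p ^ n * cnt t := by
      rw [Finset.sum_const, smul_eq_mul, hcardt, ← Finset.mul_sum, hsum]
      exact le_of_eq (by ring)
    obtain ⟨t, -, ht⟩ := Finset.exists_le_of_sum_le hne hle
    exact ⟨t, ht⟩
  obtain ⟨t, ht⟩ := hex
  set T := I.filter (fun x => ∀ i, x i + t i ≠ v0) with hT
  set sh : (Fin n → ZMod p) → (Fin n → ZMod p) := fun x i => x i + t i with hsh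
  have hshinj : Function.Injective sh := by
    intro a b h
    funext i
    have h2 := congrFun h i
    simpa [hsh] using add_right_cancel h2
  set S := T.image sh with hS
  have hScard : S.card = cnt t := by rw [hS, Finset.card_image_of_injective _ hshinj]
  have hadj_shift : ∀ u v w : ZMod p,
      (fractionGraph p q).Adj (u + w) (v + w) ↔ (fractionGraph p q).Adj u v := by
    intro u v w
    rw [frac_adj_iff, frac_adj_iff]
    have e1 : u + w - (v + w) = u - v := by ring
    have e2 : v + w - (u + w) = v - u := by ring
    rw [e1, e2]
    simp
  have hSmem : ∀ a ∈ T, a ∈ I ∧ ∀ i, a i + t i ≠ v0 := by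
    intro a ha
    exact Finset.mem_filter.mp (hT ▸ ha) |>.imp id id
  have hSindep : IsIndepFinset (strongPow (fractionGraph p q) n) S := by
    intro u hu v hv huv hadj
    rw [hS, Finset.mem_image] at hu hv
    obtain ⟨a, ha, rfl⟩ := hu
    obtain ⟨b, hb, rfl⟩ := hv
    have hab : a ≠ b := fun h => huv (by rw [h])
    apply hI a (hSmem a ha).1 b (hSmem b hb).1 hab
    obtain ⟨hne, hall⟩ := hadj
    refine ⟨hab, fun i => ?_⟩
    rcases hall i with h | h
    · exact Or.inl (add_right_cancel (show a i + t i = b i + t i from h))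
    · exact Or.inr ((hadj_shift (a i) (b i) (t i)).mp h)
  have hSavoid : ∀ x ∈ S, ∀ i, x i ≠ v0 := by
    intro x hx i
    rw [hS, Finset.mem_image] at hx
    obtain ⟨a, ha, rfl⟩ := hx
    exact (hSmem a ha).2 i
  set G : (Fin n → ZMod p) → (Fin n → ZMod p') := fun x i => gmap p q p' q' (x i) with hG
  have hkey := gmap_spec hp'0 hp'p hq'0 hq'q hpq hpq' hdet
  have hGinjOn : Set.InjOn G S := by
    intro a ha' b hb' hGab
    by_contra hab
    have hnadj : ¬ (strongPow (fractionGraph p q) n).Adj a b :=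
      hSindep a (Finset.mem_coe.mp ha') b (Finset.mem_coe.mp hb') hab
    obtain ⟨i, hi1, hi2⟩ := not_adj_strongPow hab hnadj
    exact (hkey (a i) (b i) (hSavoid a (Finset.mem_coe.mp ha') i)
      (hSavoid b (Finset.mem_coe.mp hb') i) hi1 hi2).1 (congrFun hGab i)
  have hJindep : IsIndepFinset (strongPow (fractionGraph p' q') n) (S.image G) := by
    intro u hu v hv huv hadj
    rw [Finset.mem_image] at hu hv
    obtain ⟨a, ha, rfl⟩ := hu
    obtain ⟨b, hb, rfl⟩ := hv
    have hab : a ≠ b := fun h => huv (by rw [h])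
    have hnadj := hSindep a ha b hb hab
    obtain ⟨i, hi1, hi2⟩ := not_adj_strongPow hab hnadj
    obtain ⟨hh1, hh2⟩ := hkey (a i) (b i) (hSavoid a ha i) (hSavoid b hb i) hi1 hi2
    obtain ⟨-, hall⟩ := hadj
    rcases hall i with h | h
    · exact hh1 h
    · exact hh2 h
  have hfinal : cnt t ≤ graphIndepNum (strongPow (fractionGraph p' q') n) :=
    calc cnt t = S.card := hScard.symm
      _ = (S.image G).card := (Finset.card_image_of_injOn hGinjOn).symm
      _ ≤ _ := card_le_indepNum hJindep
  calc (p - 1) ^ n * I.card ≤ p ^ n * cnt t := ht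
    _ ≤ p ^ n * graphIndepNum (strongPow (fractionGraph p' q') n) := Nat.mul_le_mul_left _ hfinal

end Averaging

section Shannon
variable {β γ : Type*} [Fintype β] [Fintype γ]

lemma rpow_indep_le_card (G : SimpleGraph β) (n : ℕ+) :
    (graphIndepNum (strongPow G (n : ℕ)) : ℝ) ^ (((n : ℕ) : ℝ)⁻¹) ≤ (Fintype.card β : ℝ) := by
  classical
  have h1 : graphIndepNum (strongPow G (n : ℕ)) ≤ Fintype.card β ^ (n : ℕ) := by
    have h := indepNum_le_card (strongPow G (n : ℕ))
    rwa [Fintype.card_fun, Fintype.card_fin] at h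
  have hn : ((n : ℕ) : ℝ) ≠ 0 := Nat.cast_ne_zero.mpr n.pos.ne'
  calc (graphIndepNum (strongPow G (n : ℕ)) : ℝ) ^ (((n : ℕ) : ℝ)⁻¹)
      ≤ ((Fintype.card β ^ (n : ℕ) : ℕ) : ℝ) ^ (((n : ℕ) : ℝ)⁻¹) :=
        Real.rpow_le_rpow (by positivity) (by exact_mod_cast h1) (by positivity)
    _ = (Fintype.card β : ℝ) := by
        push_cast
        rw [← Real.rpow_natCast (Fintype.card β : ℝ) (n : ℕ), ← Real.rpow_mul (by positivity),
          mul_inv_cancel₀ hn, Real.rpow_one]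

lemma shannon_bddAbove (G : SimpleGraph β) :
    BddAbove (Set.range fun n : ℕ+ =>
      (graphIndepNum (strongPow G (n : ℕ)) : ℝ) ^ (((n : ℕ) : ℝ)⁻¹)) := by
  refine ⟨(Fintype.card β : ℝ), ?_⟩
  rintro x ⟨n, rfl⟩
  exact rpow_indep_le_card G n

lemma shannon_le_mul {G : SimpleGraph β} {H : SimpleGraph γ} (c : ℝ) (hc : 0 ≤ c)
    (h : ∀ n : ℕ+, (graphIndepNum (strongPow G (n : ℕ)) : ℝ) ≤
      c ^ (n : ℕ) * (graphIndepNum (strongPow H (n : ℕ)) : ℝ)) :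
    shannonCapacity G ≤ c * shannonCapacity H := by
  rw [shannonCapacity, shannonCapacity]
  apply ciSup_le
  intro n
  have hn : ((n : ℕ) : ℝ) ≠ 0 := Nat.cast_ne_zero.mpr n.pos.ne'
  have hH : (graphIndepNum (strongPow H (n : ℕ)) : ℝ) ^ (((n : ℕ) : ℝ)⁻¹) ≤
      ⨆ m : ℕ+, (graphIndepNum (strongPow H (m : ℕ)) : ℝ) ^ (((m : ℕ) : ℝ)⁻¹) :=
    le_ciSup (shannon_bddAbove H) n
  calc (graphIndepNum (strongPow G (n : ℕ)) : ℝ) ^ (((n : ℕ) : ℝ)⁻¹)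
      ≤ (c ^ (n : ℕ) * (graphIndepNum (strongPow H (n : ℕ)) : ℝ)) ^ (((n : ℕ) : ℝ)⁻¹) :=
        Real.rpow_le_rpow (by positivity) (h n) (by positivity)
    _ = (c ^ (n : ℕ)) ^ (((n : ℕ) : ℝ)⁻¹) *
        (graphIndepNum (strongPow H (n : ℕ)) : ℝ) ^ (((n : ℕ) : ℝ)⁻¹) :=
        Real.mul_rpow (by positivity) (by positivity)
    _ = c * (graphIndepNum (strongPow H (n : ℕ)) : ℝ) ^ (((n : ℕ) : ℝ)⁻¹) := by
        rw [← Real.rpow_natCast c (n : ℕ), ← Real.rpow_mul hc, mul_inv_cancel₀ hn,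
          Real.rpow_one]
    _ ≤ c * ⨆ m : ℕ+, (graphIndepNum (strongPow H (m : ℕ)) : ℝ) ^ (((m : ℕ) : ℝ)⁻¹) :=
        mul_le_mul_of_nonneg_left hH hc

end Shannon

theorem vertexRemoval_bound' (p q p' q' : ℕ)
    (hp'0 : 0 < p') (hp'p : p' < p) (hq'0 : 0 < q') (hq'q : q' < q)
    (hpq : 2 * q ≤ p) (hpq' : 2 * q' ≤ p') (hdet : p * q' = q * p' + 1) :
    graphIndepNum (fractionGraph p' q') ≤ graphIndepNum (fractionGraph p q) ∧
    (graphIndepNum (fractionGraph p q) : ℝ) ≤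
      (p : ℝ) / ((p : ℝ) - 1) * (graphIndepNum (fractionGraph p' q') : ℝ) ∧
    shannonCapacity (fractionGraph p' q') ≤ shannonCapacity (fractionGraph p q) ∧
    shannonCapacity (fractionGraph p q) ≤
      (p : ℝ) / ((p : ℝ) - 1) * shannonCapacity (fractionGraph p' q') := by
  haveI : NeZero p := ⟨by omega⟩
  haveI : NeZero p' := ⟨by omega⟩
  have hcohom := fmap_cohom hp'0 hp'p hq'0 hq'q hpq hpq' hdet
  have hα1 : graphIndepNum (fractionGraph p' q') ≤ graphIndepNum (fractionGraph p q) :=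
    hcohom.indepNum_le
  have havg := averaging hp'0 hp'p hq'0 hq'q hpq hpq' hdet
  have hα2 : (p - 1) * graphIndepNum (fractionGraph p q) ≤ p * graphIndepNum (fractionGraph p' q') := by
    have h := havg 1
    rwa [pow_one, pow_one, indepNum_strongPow_one, indepNum_strongPow_one] at h
  have hpR : (1 : ℝ) < (p : ℝ) := by exact_mod_cast (show 1 < p by omega)
  have hpos : (0 : ℝ) < (p : ℝ) - 1 := by linarith
  refine ⟨hα1, ?_, ?_, ?_⟩
  · rw [div_mul_eq_mul_div, le_div_iff₀ hpos]
    have h2 : ((p : ℝ) - 1) * (graphIndepNum (fractionGraph p q) : ℝ) ≤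
        (p : ℝ) * (graphIndepNum (fractionGraph p' q') : ℝ) := by
      have hcast := hα2
      zify [show 1 ≤ p by omega] at hcast
      exact_mod_cast hcast
    linarith
  · have hforall : ∀ n : ℕ+, (graphIndepNum (strongPow (fractionGraph p' q') (n : ℕ)) : ℝ) ≤
        (1 : ℝ) ^ (n : ℕ) * (graphIndepNum (strongPow (fractionGraph p q) (n : ℕ)) : ℝ) := by
      intro n
      rw [one_pow, one_mul]
      exact_mod_cast (hcohom.strongPow (n : ℕ)).indepNum_le
    have h := shannon_le_mul 1 zero_le_one hforall
    rwa [one_mul] at h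
  · have hc : (0 : ℝ) ≤ (p : ℝ) / ((p : ℝ) - 1) := by positivity
    apply shannon_le_mul _ hc
    intro n
    have h := havg (n : ℕ)
    have hR : ((p : ℝ) - 1) ^ (n : ℕ) * (graphIndepNum (strongPow (fractionGraph p q) (n : ℕ)) : ℝ) ≤
        (p : ℝ) ^ (n : ℕ) * (graphIndepNum (strongPow (fractionGraph p' q') (n : ℕ)) : ℝ) := by
      zify [show 1 ≤ p by omega] at h
      exact_mod_cast h
    rw [div_pow, div_mul_eq_mul_div, le_div_iff₀ (by positivity)]
    nlinarith [hR]

/-- Vertex removal bound: if `p·q' − q·p' = 1` with `0 < p' < p`, `0 < q' < q`,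
`p ≥ 2q`, `p' ≥ 2q'`, then
`α(E_{p'/q'}) ≤ α(E_{p/q}) ≤ (p/(p−1))·α(E_{p'/q'})` and
`Θ(E_{p'/q'}) ≤ Θ(E_{p/q}) ≤ (p/(p−1))·Θ(E_{p'/q'})`. -/
theorem vertexRemoval_bound (p q p' q' : ℕ)
    (hp'0 : 0 < p') (hp'p : p' < p) (hq'0 : 0 < q') (hq'q : q' < q)
    (hpq : 2 * q ≤ p) (hpq' : 2 * q' ≤ p') (hdet : p * q' = q * p' + 1) :
    graphIndepNum (fractionGraph p' q') ≤ graphIndepNum (fractionGraph p q) ∧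
    (graphIndepNum (fractionGraph p q) : ℝ) ≤
      (p : ℝ) / ((p : ℝ) - 1) * (graphIndepNum (fractionGraph p' q') : ℝ) ∧
    shannonCapacity (fractionGraph p' q') ≤ shannonCapacity (fractionGraph p q) ∧
    shannonCapacity (fractionGraph p q) ≤
      (p : ℝ) / ((p : ℝ) - 1) * shannonCapacity (fractionGraph p' q') :=
  vertexRemoval_bound' p q p' q' hp'0 hp'p hq'0 hq'q hpq hpq' hdet
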